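/- Two finitely atomic measures on ℝ² with the same moment matrix kernels at every degree k have the same support: if for all k, ker(M(μ)(k)) = ker(M(ν)(k)), where μ and ν are finitely atomic with atom sets S and T respectively, then S = T. -/

import Mathlib

/-!
For positive weights, `wᵀ M(μ)(k) w = ∑ λₛ P_w(s)²`, where `P_w` is the polynomial of degree
`≤ k` with coefficient vector `w`; so the kernel of `M(μ)(k)` consists of the coefficient vectors
of polynomials vanishing on the support `S`. The polynomial `∏_{t ∈ T} |z - t|²` has degree
`2|T|` and vanishes exactly on `T`: if `ker M(ν)(2|T|) ⊆ ker M(μ)(2|T|)`, it vanishes on `S`,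
whence `S ⊆ T`.
-/

/-- Index of monomials `x^p y^q` with total degree `p + q ≤ k`. -/
abbrev Mon (k : ℕ) := {pq : Fin (k+1) × Fin (k+1) // (pq.1 : ℕ) + (pq.2 : ℕ) ≤ k}

/-- Moment matrix of the point mass `δ(a,b)` up to total degree `k`. -/
noncomputable def pointMomentMatrix (a b : ℝ) (k : ℕ) : Matrix (Mon k) (Mon k) ℝ :=
  Matrix.of fun i j =>
    a ^ ((i.1.1 : ℕ) + (j.1.1 : ℕ)) * b ^ ((i.1.2 : ℕ) + (j.1.2 : ℕ))

/-- Vector of monomial evaluations at `(a,b)`. -/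
noncomputable def monVec (a b : ℝ) (k : ℕ) : Mon k → ℝ :=
  fun i => a ^ (i.1.1 : ℕ) * b ^ (i.1.2 : ℕ)

open Matrix MvPolynomial

theorem Matrix.dotProduct_sum_smul_vecMulVec_self_mulVec {ι n R : Type*} [Fintype ι] [Fintype n]
    [CommRing R] (c : ι → R) (v : ι → n → R) (w : n → R) :
    w ⬝ᵥ (∑ i, c i • vecMulVec (v i) (v i)) *ᵥ w = ∑ i, c i * (v i ⬝ᵥ w) ^ 2 := by
  simp only [sum_mulVec, dotProduct_sum, smul_mulVec, vecMulVec_mulVec, op_smul_eq_smul,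
    smul_smul, dotProduct_smul, smul_eq_mul]
  refine Finset.sum_congr rfl fun i _ => ?_
  rw [dotProduct_comm w]
  ring

theorem Matrix.sum_smul_vecMulVec_self_mulVec_eq_zero_iff {ι n R : Type*} [Fintype ι]
    [Fintype n] [CommRing R] [LinearOrder R] [IsStrictOrderedRing R]
    {c : ι → R} (hc : ∀ i, 0 < c i) (v : ι → n → R) (w : n → R) :
    (∑ i, c i • vecMulVec (v i) (v i)) *ᵥ w = 0 ↔ ∀ i, v i ⬝ᵥ w = 0 := by
  constructor
  · intro hw i
    have hquad := dotProduct_sum_smul_vecMulVec_self_mulVec c v w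
    rw [hw, dotProduct_zero, eq_comm, Finset.sum_eq_zero_iff_of_nonneg
      fun j _ => mul_nonneg (hc j).le (sq_nonneg _)] at hquad
    simpa [(hc i).ne'] using hquad i (Finset.mem_univ i)
  · intro hw
    simp [sum_mulVec, smul_mulVec, vecMulVec_mulVec, hw]

theorem pointMomentMatrix_eq_vecMulVec (x y : ℝ) (k : ℕ) :
    pointMomentMatrix x y k = vecMulVec (monVec x y k) (monVec x y k) := by
  ext i j
  simp only [pointMomentMatrix, monVec, vecMulVec_apply, of_apply, pow_add]
  ring

theorem momentMatrix_mulVec_eq_zero_iff {ι : Type*} [Fintype ι] (p : ι → ℝ × ℝ)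
    {c : ι → ℝ} (hc : ∀ i, 0 < c i) {k : ℕ} (w : Mon k → ℝ) :
    (∑ i, c i • pointMomentMatrix (p i).1 (p i).2 k) *ᵥ w = 0 ↔
      ∀ i, monVec (p i).1 (p i).2 k ⬝ᵥ w = 0 := by
  simp only [pointMomentMatrix_eq_vecMulVec]
  exact sum_smul_vecMulVec_self_mulVec_eq_zero_iff hc _ w

noncomputable def monExponent (k : ℕ) (i : Mon k) : Fin 2 →₀ ℕ :=
  Finsupp.single 0 (i.1.1 : ℕ) + Finsupp.single 1 (i.1.2 : ℕ)

theorem monExponent_injective (k : ℕ) : Function.Injective (monExponent k) := by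
  intro i j hij
  have h0 := congrArg (· 0) hij
  have h1 := congrArg (· 1) hij
  simp only [monExponent, Finsupp.add_apply, Finsupp.single_apply] at h0 h1
  ext <;> simp_all

theorem mem_range_monExponent {k : ℕ} {d : Fin 2 →₀ ℕ} (hd : d 0 + d 1 ≤ k) :
    d ∈ Set.range (monExponent k) :=
  ⟨⟨(⟨d 0, by omega⟩, ⟨d 1, by omega⟩), hd⟩, by ext a; fin_cases a <;> simp [monExponent]⟩

noncomputable def coeffVec (k : ℕ) (P : MvPolynomial (Fin 2) ℝ) : Mon k → ℝ :=
  fun i => P.coeff (monExponent k i)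

theorem monVec_dotProduct_coeffVec {k : ℕ} {P : MvPolynomial (Fin 2) ℝ}
    (hP : P.totalDegree ≤ k) (x y : ℝ) :
    monVec x y k ⬝ᵥ coeffVec k P = eval ![x, y] P := by
  have hsupp : P.support ⊆ Finset.univ.map ⟨monExponent k, monExponent_injective k⟩ := by
    intro d hd
    have hdeg : d 0 + d 1 ≤ k := by
      simpa [Finsupp.sum_fintype] using (le_totalDegree hd).trans hP
    simpa using mem_range_monExponent hdeg
  rw [eval_eq', Finset.sum_subset hsupp fun d _ hd => by simp [notMem_support_iff.mp hd],
    Finset.sum_map]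
  simp [dotProduct, monVec, coeffVec, monExponent, Fin.prod_univ_two, mul_comm]

section prodSqDist

variable {ι : Type*} [Fintype ι] (b : ι → ℝ × ℝ)

noncomputable def prodSqDist :
    MvPolynomial (Fin 2) ℝ :=
  ∏ j, ((X 0 - C (b j).1) ^ 2 + (X 1 - C (b j).2) ^ 2)

theorem totalDegree_prodSqDist_le :
    (prodSqDist b).totalDegree ≤ 2 * Fintype.card ι := by
  have hsq_deg (i : Fin 2) (r : ℝ) : ((X i - C r) ^ 2 : MvPolynomial (Fin 2) ℝ).totalDegree ≤ 2 :=
    (totalDegree_pow _ 2).trans <| by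
      simpa using (totalDegree_sub_C_le (X i) r).trans (totalDegree_X i).le
  calc (prodSqDist b).totalDegree
      ≤ ∑ j, ((X 0 - C (b j).1) ^ 2 + (X 1 - C (b j).2) ^ 2 :
          MvPolynomial (Fin 2) ℝ).totalDegree := totalDegree_finsetProd _ _
    _ ≤ ∑ _j : ι, 2 :=
        Finset.sum_le_sum fun j _ => (totalDegree_add _ _).trans (max_le (hsq_deg 0 _) (hsq_deg 1 _))
    _ = 2 * Fintype.card ι := by simp [mul_comm]

theorem eval_prodSqDist_eq_zero_iff (p : ℝ × ℝ) :
    eval ![p.1, p.2] (prodSqDist b) = 0 ↔ p ∈ Set.range b := by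
  have hsq (j : ι) : (p.1 - (b j).1) ^ 2 + (p.2 - (b j).2) ^ 2 = 0 ↔ b j = p := by
    rw [add_eq_zero_iff_of_nonneg (sq_nonneg _) (sq_nonneg _), sq_eq_zero_iff, sq_eq_zero_iff,
      sub_eq_zero, sub_eq_zero, Prod.ext_iff, eq_comm, @eq_comm _ p.2]
  simp [prodSqDist, Finset.prod_eq_zero_iff, hsq]

theorem exists_separating_vector {p : ℝ × ℝ} (hp : p ∉ Set.range b) :
    ∃ w : Mon (2 * Fintype.card ι) → ℝ,
      (∀ j, monVec (b j).1 (b j).2 _ ⬝ᵥ w = 0) ∧ monVec p.1 p.2 _ ⬝ᵥ w ≠ 0 := by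
  refine ⟨coeffVec _ (prodSqDist b), fun j => ?_, ?_⟩ <;>
    rw [monVec_dotProduct_coeffVec (totalDegree_prodSqDist_le b)]
  · exact (eval_prodSqDist_eq_zero_iff b (b j)).mpr ⟨j, rfl⟩
  · exact (eval_prodSqDist_eq_zero_iff b p).not.mpr hp

end prodSqDist

theorem range_subset_of_ker_le {ι κ : Type*} [Fintype ι] [Fintype κ]
    (a : ι → ℝ × ℝ) (b : κ → ℝ × ℝ) {lam : ι → ℝ} {kap : κ → ℝ}
    (hlam : ∀ i, 0 < lam i) (hkap : ∀ j, 0 < kap j)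
    (h : ∀ k : ℕ, ∀ w : Mon k → ℝ,
      (∑ j, kap j • pointMomentMatrix (b j).1 (b j).2 k) *ᵥ w = 0 →
        (∑ i, lam i • pointMomentMatrix (a i).1 (a i).2 k) *ᵥ w = 0) :
    Set.range a ⊆ Set.range b := by
  rintro _ ⟨i, rfl⟩
  by_contra hi
  obtain ⟨w, hbw, haw⟩ := exists_separating_vector b hi
  have hker := h _ w ((momentMatrix_mulVec_eq_zero_iff b hkap w).mpr hbw)
  exact haw ((momentMatrix_mulVec_eq_zero_iff a hlam w).mp hker i)

theorem same_kernels_imp_same_atoms_general (n m : ℕ) (a : Fin n → ℝ × ℝ) (b : Fin m → ℝ × ℝ)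
    (lam : Fin n → ℝ) (kap : Fin m → ℝ)
    (hlam : ∀ i, 0 < lam i) (hkap : ∀ j, 0 < kap j)
    (h : ∀ k : ℕ, ∀ w : Mon k → ℝ,
      (∑ i, lam i • pointMomentMatrix (a i).1 (a i).2 k).mulVec w = 0 ↔
        (∑ j, kap j • pointMomentMatrix (b j).1 (b j).2 k).mulVec w = 0) :
    Set.range a = Set.range b :=
  (range_subset_of_ker_le a b hlam hkap fun k w => (h k w).mpr).antisymm
    (range_subset_of_ker_le b a hkap hlam fun k w => (h k w).mp)

theorem same_kernels_imp_same_atoms (n m : ℕ) (a : Fin n → ℝ × ℝ) (b : Fin m → ℝ × ℝ)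
    (ha : Function.Injective a) (hb : Function.Injective b)
    (lam : Fin n → ℝ) (kap : Fin m → ℝ)
    (hlam : ∀ i, 0 < lam i) (hkap : ∀ j, 0 < kap j)
    (h : ∀ k : ℕ, ∀ w : Mon k → ℝ,
      (∑ i, lam i • pointMomentMatrix (a i).1 (a i).2 k).mulVec w = 0 ↔
        (∑ j, kap j • pointMomentMatrix (b j).1 (b j).2 k).mulVec w = 0) :
    Set.range a = Set.range b :=
  same_kernels_imp_same_atoms_general n m a b lam kap hlam hkap h
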